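/- arXiv:2407.11685 — 9 statements merged into one kernel-verified Lean document; each statement's English description precedes it below -/
import Mathlib

section
/- For all n ≥ k ≥ 1 and z ∈ ℝⁿ, z lies in the kernel of A if and only if z is periodic with period k (i.e., z_j = z_{j mod k} for all 0 ≤ j < n) and the sum of its first k entries is zero (∑_{j=0}^{k−1} z_j = 0). -/
/-- Valid convolution with a box of width `k`: `(A x)_i = ∑_{t=0}^{k-1} x_{i+t}`. -/
def boxA (n k : ℕ) (x : Fin n → ℝ) : Fin (n - k + 1) → ℝ :=
  fun i => ∑ j : Fin n, if (i : ℕ) ≤ (j : ℕ) ∧ (j : ℕ) < (i : ℕ) + k then x j else 0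

/-- `z` is in the kernel of `A` iff `z` is periodic with period `k` and its first `k`
entries sum to zero. -/
theorem ker_boxA_iff (n k : ℕ) (hk : 1 ≤ k) (hn : k ≤ n) (z : Fin n → ℝ) :
    boxA n k z = 0 ↔
      ((∀ j : Fin n, z j = z ⟨(j : ℕ) % k, lt_of_lt_of_le (Nat.mod_lt _ hk) hn⟩) ∧
        ∑ t : Fin k, z (Fin.castLE hn t) = 0) := by
  classical
  set w : ℕ → ℝ := fun j => if h : j < n then z ⟨j, h⟩ else 0 with hw
  have hwz : ∀ (j : ℕ) (h : j < n), w j = z ⟨j, h⟩ := fun j h => dif_pos h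
  have hbox : ∀ i : Fin (n - k + 1),
      boxA n k z i = ∑ t ∈ Finset.range k, w ((i : ℕ) + t) := by
    intro i
    have hik : (i : ℕ) + k ≤ n := by have := i.isLt; omega
    have h1 : boxA n k z i
        = ∑ j ∈ Finset.range n, (if (i : ℕ) ≤ j ∧ j < (i : ℕ) + k then w j else 0) := by
      rw [boxA, ← Fin.sum_univ_eq_sum_range]
      refine Finset.sum_congr rfl fun j _ => ?_
      rw [hwz j j.isLt]
    rw [h1, ← Finset.sum_filter]
    have h2 : (Finset.range n).filter (fun j => (i : ℕ) ≤ j ∧ j < (i : ℕ) + k)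
        = Finset.Ico (i : ℕ) ((i : ℕ) + k) := by
      ext j
      simp only [Finset.mem_filter, Finset.mem_range, Finset.mem_Ico]
      omega
    rw [h2, Finset.sum_Ico_eq_sum_range]
    simp
  have key : ∀ i : ℕ,
      w i + ∑ t ∈ Finset.range k, w (i + 1 + t)
        = (∑ t ∈ Finset.range k, w (i + t)) + w (i + k) := by
    intro i
    have e1 : ∑ t ∈ Finset.range (k + 1), w (i + t)
        = (∑ t ∈ Finset.range k, w (i + (t + 1))) + w (i + 0) :=
      Finset.sum_range_succ' (fun t => w (i + t)) k
    have e2 : ∑ t ∈ Finset.range (k + 1), w (i + t)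
        = (∑ t ∈ Finset.range k, w (i + t)) + w (i + k) :=
      Finset.sum_range_succ (fun t => w (i + t)) k
    have e3 : ∑ t ∈ Finset.range k, w (i + (t + 1))
        = ∑ t ∈ Finset.range k, w (i + 1 + t) := by
      refine Finset.sum_congr rfl fun t _ => ?_
      ring_nf
    rw [e3] at e1
    simp only [Nat.add_zero] at e1
    linarith [e1, e2]
  have hsum0 : (∑ t : Fin k, z (Fin.castLE hn t)) = ∑ t ∈ Finset.range k, w t := by
    rw [← Fin.sum_univ_eq_sum_range]
    refine Finset.sum_congr rfl fun t _ => ?_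
    rw [hwz t (lt_of_lt_of_le t.isLt hn)]
    rfl
  constructor
  · intro h
    have hS : ∀ i : ℕ, i + k ≤ n → ∑ t ∈ Finset.range k, w (i + t) = 0 := by
      intro i hi
      have : boxA n k z ⟨i, by omega⟩ = 0 := by rw [h]; rfl
      rw [hbox ⟨i, by omega⟩] at this
      exact this
    have step : ∀ i : ℕ, i + k < n → w (i + k) = w i := by
      intro i hi
      have h1 := hS i (by omega)
      have h2 := hS (i + 1) (by omega)
      have h3 := key i
      linarith
    have per' : ∀ j : ℕ, j < n → w j = w (j % k) := by
      intro j
      induction j using Nat.strong_induction_on with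
      | _ j ih =>
        intro hj
        by_cases hjk : j < k
        · rw [Nat.mod_eq_of_lt hjk]
        · push_neg at hjk
          have hjj : j - k + k = j := by omega
          have e1 : w j = w (j - k) := by
            have := step (j - k) (by omega)
            rwa [hjj] at this
          rw [e1, ih (j - k) (by omega) (by omega), Nat.mod_eq_sub_mod hjk]
    constructor
    · intro j
      have := per' j j.isLt
      rw [hwz j j.isLt, hwz ((j : ℕ) % k) (lt_of_lt_of_le (Nat.mod_lt _ hk) hn)] at this
      exact this
    · rw [hsum0]
      have := hS 0 (by omega)
      simpa using this
  · rintro ⟨per, sum0⟩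
    have per' : ∀ j : ℕ, j < n → w j = w (j % k) := by
      intro j hj
      rw [hwz j hj, hwz ((j : ℕ) % k) (lt_of_lt_of_le (Nat.mod_lt _ hk) hn)]
      exact per ⟨j, hj⟩
    rw [hsum0] at sum0
    have hS : ∀ i : ℕ, i + k ≤ n → ∑ t ∈ Finset.range k, w (i + t) = 0 := by
      intro i
      induction i with
      | zero => intro _; simpa using sum0
      | succ i ih =>
        intro hi
        have h1 := ih (by omega)
        have h3 := key i
        have e1 : w (i + k) = w i := by
          rw [per' (i + k) (by omega), per' i (by omega), Nat.add_mod_right]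
        linarith
    funext i
    have hik : (i : ℕ) + k ≤ n := by have := i.isLt; omega
    rw [hbox i]
    exact (hS i hik).trans rfl
end

section
/- If k ≥ 1 divides n, then the kernel of the circular box convolution B equals the kernel of the valid box convolution A, i.e., ker(B) = ker(A). -/
/-- Circular convolution with a box of width `k`: `(B x)_i = ∑_{t=0}^{k-1} x_{(i+t) mod n}`. -/
def boxB (n k : ℕ) (x : Fin n → ℝ) : Fin n → ℝ :=
  fun i => ∑ t : Fin k, x ⟨((i : ℕ) + (t : ℕ)) % n, Nat.mod_lt _ i.pos⟩

/-- If `k` divides `n` then `ker(B) = ker(A)`. -/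
theorem ker_boxB_eq_ker_boxA (n k : ℕ) (hk : 1 ≤ k) (hn : k ≤ n) (hdvd : k ∣ n)
    (z : Fin n → ℝ) : boxB n k z = 0 ↔ boxA n k z = 0 := by
  have hn0 : 0 < n := lt_of_lt_of_le hk hn
  obtain ⟨k', rfl⟩ : ∃ k', k = k' + 1 := ⟨k - 1, by omega⟩
  set w : ℕ → ℝ := fun m => z ⟨m % n, Nat.mod_lt _ hn0⟩ with hw
  set S : ℕ → ℝ := fun i => ∑ t ∈ Finset.range (k' + 1), w (i + t) with hS
  have hwz : ∀ j : Fin n, w (j : ℕ) = z j := fun j =>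
    congrArg z (Fin.ext (Nat.mod_eq_of_lt j.isLt))
  have hboxB : ∀ i : Fin n, boxB n (k' + 1) z i = S (i : ℕ) := by
    intro i
    exact Fin.sum_univ_eq_sum_range (fun t => w ((i : ℕ) + t)) (k' + 1)
  have hboxA : ∀ i : Fin (n - (k' + 1) + 1), boxA n (k' + 1) z i = S (i : ℕ) := by
    intro i
    have hik : (i : ℕ) + (k' + 1) ≤ n := by have := i.isLt; omega
    simp only [hS, boxA]
    have step1 : (∑ j : Fin n, if (i : ℕ) ≤ (j : ℕ) ∧ (j : ℕ) < (i : ℕ) + (k' + 1) then z j else 0)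
        = ∑ j ∈ Finset.range n, (if (i : ℕ) ≤ j ∧ j < (i : ℕ) + (k' + 1) then w j else 0) := by
      rw [← Fin.sum_univ_eq_sum_range
        (fun j => if (i : ℕ) ≤ j ∧ j < (i : ℕ) + (k' + 1) then w j else 0) n]
      apply Finset.sum_congr rfl
      intro j _
      simp only [hwz j]
    rw [step1, ← Finset.sum_filter]
    have hfil : (Finset.range n).filter (fun j => (i : ℕ) ≤ j ∧ j < (i : ℕ) + (k' + 1))
        = Finset.Ico (i : ℕ) ((i : ℕ) + (k' + 1)) := by
      ext j
      simp only [Finset.mem_filter, Finset.mem_range, Finset.mem_Ico]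
      omega
    rw [hfil, Finset.sum_Ico_eq_sum_range]
    simp
  have eq1 : ∀ m, S m = w m + ∑ t ∈ Finset.range k', w (m + 1 + t) := by
    intro m
    simp only [hS]
    rw [Finset.sum_range_succ', Nat.add_zero, add_comm]
    congr 1
    apply Finset.sum_congr rfl
    intro t _
    congr 1
    omega
  have eq2 : ∀ m, S (m + 1) = (∑ t ∈ Finset.range k', w (m + 1 + t)) + w (m + (k' + 1)) := by
    intro m
    simp only [hS]
    rw [Finset.sum_range_succ]
    congr 1
    congr 1
    omega
  constructor
  · intro hB
    funext i
    have hlt : (i : ℕ) < n := by have := i.isLt; omega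
    have := congrFun hB ⟨(i : ℕ), hlt⟩
    rw [hboxB, Pi.zero_apply] at this
    rw [Pi.zero_apply, hboxA]
    exact this
  · intro hA
    have hAS : ∀ m ≤ n - (k' + 1), S m = 0 := by
      intro m hm
      have := congrFun hA ⟨m, by omega⟩
      rw [hboxA, Pi.zero_apply] at this
      exact this
    have hstep : ∀ m, m + (k' + 1) < n → w (m + (k' + 1)) = w m := by
      intro m hm
      have h1 := hAS m (by omega)
      have h2 := hAS (m + 1) (by omega)
      rw [eq1] at h1
      rw [eq2] at h2
      linarith
    have hmod : ∀ m, m < n → w m = w (m % (k' + 1)) := by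
      intro m
      induction m using Nat.strong_induction_on with
      | _ m ih =>
        intro hm
        by_cases h : m < k' + 1
        · rw [Nat.mod_eq_of_lt h]
        · have h1 : m - (k' + 1) + (k' + 1) = m := by omega
          have hst : w m = w (m - (k' + 1)) := by
            have := hstep (m - (k' + 1)) (by omega)
            rw [h1] at this
            exact this
          calc w m = w (m - (k' + 1)) := hst
            _ = w ((m - (k' + 1)) % (k' + 1)) := ih _ (by omega) (by omega)
            _ = w (m % (k' + 1)) := by
                congr 1
                conv_rhs => rw [← h1]
                rw [Nat.add_mod_right]
    have hper : ∀ m, w m = w (m % (k' + 1)) := by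
      intro m
      have h1 : w m = w (m % n) :=
        congrArg z (Fin.ext (Nat.mod_mod_of_dvd m dvd_rfl).symm)
      rw [h1, hmod (m % n) (Nat.mod_lt _ hn0), Nat.mod_mod_of_dvd m hdvd]
    have hK : ∀ m, w (m + (k' + 1)) = w m := by
      intro m
      rw [hper (m + (k' + 1)), hper m, Nat.add_mod_right]
    have Srec : ∀ m, S (m + 1) = S m := by
      intro m
      rw [eq1 m, eq2 m, hK]
      ring
    have Sall : ∀ m, S m = 0 := by
      intro m
      induction m with
      | zero => exact hAS 0 (by omega)
      | succ m ih => rw [Srec]; exact ih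
    funext i
    rw [hboxB, Pi.zero_apply]
    exact Sall (i : ℕ)
end

section
/- (Nullspace property for the box kernel) Let n ≥ k ≥ 1 and let z ∈ ℝⁿ be a nonzero vector in the kernel of A. Then for every subset S ⊆ {0,…,n−1} with |S| < ⌊n/k⌋, one has ‖z_{S̄}‖₁ > ‖z_S‖₁, i.e., ∑_{j ∉ S} |z_j| > ∑_{j ∈ S} |z_j|. -/
/-- Nullspace property: a nonzero `z ∈ ker(A)` satisfies `‖z_{S̄}‖₁ > ‖z_S‖₁` whenever
`|S| < ⌊n/k⌋`. -/
theorem boxA_nullspace_property (n k : ℕ) (hk : 1 ≤ k) (hn : k ≤ n)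
    (z : Fin n → ℝ) (hz : boxA n k z = 0) (hz0 : z ≠ 0)
    (S : Finset (Fin n)) (hS : S.card < n / k) :
    ∑ j ∈ S, |z j| < ∑ j ∈ Sᶜ, |z j| := by
  set m := n / k with hm
  have hk0 : 0 < k := hk
  have hm1 : 1 ≤ m := (Nat.one_le_div_iff hk0).2 hn
  have hmk : m * k ≤ n := Nat.div_mul_le_self n k
  set zv : ℕ → ℝ := fun j => if h : j < n then z ⟨j, h⟩ else 0 with hzv
  have hzv_eq : ∀ j : Fin n, zv (j : ℕ) = z j := by
    intro j; simp [hzv, j.isLt]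
  -- window sums are zero
  have win : ∀ i : ℕ, i + k ≤ n → ∑ j ∈ Finset.Ico i (i + k), zv j = 0 := by
    intro i hi
    have hi' : i < n - k + 1 := by omega
    have h0 := congrFun hz ⟨i, hi'⟩
    simp only [boxA, Pi.zero_apply] at h0
    have h1 : ∑ j : Fin n, (if i ≤ (j : ℕ) ∧ (j : ℕ) < i + k then z j else 0)
        = ∑ j ∈ Finset.range n, (if i ≤ j ∧ j < i + k then zv j else 0) := by
      rw [← Fin.sum_univ_eq_sum_range (fun j => if i ≤ j ∧ j < i + k then zv j else 0) n]
      exact Finset.sum_congr rfl (fun j _ => by rw [hzv_eq])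
    have h2 : (Finset.range n).filter (fun j => i ≤ j ∧ j < i + k) = Finset.Ico i (i + k) := by
      ext j
      simp [Finset.mem_Ico, Finset.mem_filter, Finset.mem_range]
      omega
    rw [← h2, Finset.sum_filter]
    rw [h1] at h0
    exact h0
  -- one-step periodicity
  have step : ∀ i : ℕ, i + k < n → zv (i + k) = zv i := by
    intro i hi
    have w1 := win i (by omega)
    have w2 := win (i + 1) (by omega)
    have e1 : ∑ j ∈ Finset.Ico i (i + k), zv j
        = zv i + ∑ j ∈ Finset.Ico (i + 1) (i + k), zv j :=
      Finset.sum_eq_sum_Ico_succ_bot (by omega) zv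
    have e2 : ∑ j ∈ Finset.Ico (i + 1) (i + 1 + k), zv j
        = (∑ j ∈ Finset.Ico (i + 1) (i + k), zv j) + zv (i + k) := by
      have : i + 1 + k = (i + k) + 1 := by omega
      rw [this, Finset.sum_Ico_succ_top (by omega) zv]
    rw [e1] at w1
    rw [e2] at w2
    linarith
  -- full periodicity
  have per : ∀ q r : ℕ, r + q * k < n → zv (r + q * k) = zv r := by
    intro q
    induction q with
    | zero => intro r _; simp
    | succ q ih =>
      intro r hr
      have e : r + (q + 1) * k = (r + q * k) + k := by ring
      rw [e]
      rw [step (r + q * k) (by omega)]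
      exact ih r (by omega)
  have hmod : ∀ j : ℕ, j < n → zv j = zv (j % k) := by
    intro j hj
    have e : j % k + j / k * k = j := Nat.mod_add_div' j k
    conv_lhs => rw [← e]
    exact per (j / k) (j % k) (by omega)
  -- sum of one period is zero
  have sum0 : ∑ r ∈ Finset.range k, zv r = 0 := by
    have h := win 0 (by omega)
    rw [Finset.range_eq_Ico]
    simpa only [zero_add] using h
  -- the maximal element of one period
  obtain ⟨r0, hr0mem, hr0max⟩ :=
    Finset.exists_max_image (Finset.range k) (fun r => |zv r|) ⟨0, Finset.mem_range.2 hk0⟩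
  set M := |zv r0| with hM
  have hMax : ∀ j : ℕ, j < n → |zv j| ≤ M := by
    intro j hj
    rw [hmod j hj]
    exact hr0max _ (Finset.mem_range.2 (Nat.mod_lt j hk0))
  have hMpos : 0 < M := by
    obtain ⟨j, hj⟩ := Function.ne_iff.1 hz0
    have : |z j| ≤ M := by rw [← hzv_eq j]; exact hMax _ j.isLt
    have : 0 < |z j| := abs_pos.2 (by simpa using hj)
    linarith [hMax (j : ℕ) j.isLt, (hzv_eq j ▸ this : 0 < |zv (j:ℕ)|),
      hzv_eq j ▸ hMax (j : ℕ) j.isLt]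
  set Sw := ∑ r ∈ Finset.range k, |zv r| with hSw
  have hSw2M : 2 * M ≤ Sw := by
    have h1 : zv r0 + ∑ r ∈ (Finset.range k).erase r0, zv r = 0 := by
      rw [Finset.add_sum_erase _ zv hr0mem]; exact sum0
    have h2 : Sw = |zv r0| + ∑ r ∈ (Finset.range k).erase r0, |zv r| :=
      (Finset.add_sum_erase _ (fun r => |zv r|) hr0mem).symm
    have h3 : |∑ r ∈ (Finset.range k).erase r0, zv r|
        ≤ ∑ r ∈ (Finset.range k).erase r0, |zv r| := Finset.abs_sum_le_sum_abs _ _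
    have h4 : |∑ r ∈ (Finset.range k).erase r0, zv r| = M := by
      have : ∑ r ∈ (Finset.range k).erase r0, zv r = -zv r0 := by linarith
      rw [this, abs_neg]
    linarith [h2, h3, h4]
  set total := ∑ j ∈ Finset.range n, |zv j| with htotal
  have hTot : ∑ j : Fin n, |z j| = total := by
    rw [htotal, ← Fin.sum_univ_eq_sum_range (fun j => |zv j|) n]
    exact Finset.sum_congr rfl (fun j _ => by rw [hzv_eq])
  -- total ≥ m * Sw
  have hTotSw : (m : ℝ) * Sw ≤ total := by
    set P := Finset.range k ×ˢ Finset.range m with hP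
    set F : ℕ × ℕ → ℕ := fun p => p.1 + p.2 * k with hF
    have hFlt : ∀ p ∈ P, F p < n := by
      intro p hp
      obtain ⟨hp1, hp2⟩ := Finset.mem_product.1 hp
      have h1 : p.1 < k := Finset.mem_range.1 hp1
      have h2 : p.2 < m := Finset.mem_range.1 hp2
      have : p.1 + p.2 * k < (p.2 + 1) * k := by
        have : (p.2 + 1) * k = p.2 * k + k := by ring
        omega
      have h4 : (p.2 + 1) * k ≤ m * k := Nat.mul_le_mul_right k (by omega)
      simp only [hF]
      omega
    have hinj : Set.InjOn F P := by
      intro p hp q hq hpq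
      obtain ⟨hp1, _⟩ := Finset.mem_product.1 hp
      obtain ⟨hq1, _⟩ := Finset.mem_product.1 hq
      have h1 : p.1 < k := Finset.mem_range.1 hp1
      have h2 : q.1 < k := Finset.mem_range.1 hq1
      have e1 : (F p) % k = p.1 := by
        simp only [hF]; rw [Nat.add_mul_mod_self_right]; exact Nat.mod_eq_of_lt h1
      have e2 : (F q) % k = q.1 := by
        simp only [hF]; rw [Nat.add_mul_mod_self_right]; exact Nat.mod_eq_of_lt h2
      have e3 : (F p) / k = p.2 := by
        simp only [hF]; rw [Nat.add_mul_div_right _ _ hk0, Nat.div_eq_of_lt h1]; omega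
      have e4 : (F q) / k = q.2 := by
        simp only [hF]; rw [Nat.add_mul_div_right _ _ hk0, Nat.div_eq_of_lt h2]; omega
      have : p.1 = q.1 := by rw [← e1, ← e2, hpq]
      have : p.2 = q.2 := by rw [← e3, ← e4, hpq]
      exact Prod.ext ‹p.1 = q.1› this
    have hsub : P.image F ⊆ Finset.range n := by
      intro x hx
      obtain ⟨p, hp, rfl⟩ := Finset.mem_image.1 hx
      exact Finset.mem_range.2 (hFlt p hp)
    have h5 : ∑ x ∈ P.image F, |zv x| ≤ total :=
      Finset.sum_le_sum_of_subset_of_nonneg hsub (fun _ _ _ => abs_nonneg _)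
    have h6 : ∑ x ∈ P.image F, |zv x| = ∑ p ∈ P, |zv (F p)| :=
      Finset.sum_image (fun p hp q hq h => hinj hp hq h)
    have h7 : ∑ p ∈ P, |zv (F p)| = ∑ p ∈ P, |zv p.1| := by
      refine Finset.sum_congr rfl (fun p hp => ?_)
      have := hFlt p hp
      simp only [hF] at this ⊢
      rw [per p.2 p.1 this]
    have h8 : ∑ p ∈ P, |zv p.1| = (m : ℝ) * Sw := by
      rw [hP, Finset.sum_product]
      simp [Finset.sum_const, hSw, Finset.mul_sum, mul_comm]
    linarith [h5, h6.symm ▸ h7 ▸ h8]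
  -- bound the S-sum
  have hSsum : ∑ j ∈ S, |z j| ≤ (S.card : ℝ) * M := by
    have := Finset.sum_le_card_nsmul S (fun j => |z j|) M
      (fun j _ => by show |z j| ≤ M; rw [← hzv_eq j]; exact hMax _ j.isLt)
    simpa [nsmul_eq_mul] using this
  have hcompl : (∑ j ∈ S, |z j|) + (∑ j ∈ Sᶜ, |z j|) = total := by
    rw [Finset.sum_add_sum_compl]
    exact hTot
  have hcard : (S.card : ℝ) ≤ (m : ℝ) - 1 := by
    have : S.card + 1 ≤ m := hS
    have := Nat.cast_le (α := ℝ) |>.2 this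
    push_cast at this
    linarith
  have e1 : 2 * (m : ℝ) * M ≤ (m : ℝ) * Sw := by
    nlinarith [hSw2M, (Nat.cast_nonneg m : (0:ℝ) ≤ m)]
  have e2 : (S.card : ℝ) * M ≤ (m : ℝ) * M - M := by
    nlinarith [hcard, hMpos.le]
  linarith [hTotSw, hSsum, hcompl, hMpos, e1, e2]
end

section
/- Let n ≥ k ≥ 1 and let x ∈ ℝⁿ satisfy |supp(x)| < ⌊n/k⌋. Then x is the unique minimizer of the ℓ1 norm over all solutions of the valid box-deconvolution problem: for every x' ∈ ℝⁿ with Ax' = Ax and x' ≠ x, one has ‖x'‖₁ > ‖x‖₁. -/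
lemma sum_range_mul_mod (k : ℕ) (g : ℕ → ℝ) (m : ℕ) :
    ∑ t ∈ Finset.range (m * k), g (t % k) = m * ∑ r ∈ Finset.range k, g r := by
  induction m with
  | zero => simp
  | succ m ih =>
    rw [show (m + 1) * k = m * k + k by ring, Finset.sum_range_add, ih]
    have h : ∀ r ∈ Finset.range k, g ((m * k + r) % k) = g r := by
      intro r hr
      rw [show m * k + r = r + m * k by ring, Nat.add_mul_mod_self_right,
        Nat.mod_eq_of_lt (Finset.mem_range.mp hr)]
    rw [Finset.sum_congr rfl h]
    push_cast; ring

/-- If `|supp(x)| < ⌊n/k⌋` then `x` is the unique `ℓ1` minimizer among solutions of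
`A x' = A x`: every other solution has strictly larger `ℓ1` norm. -/
theorem boxA_l1_recovery (n k : ℕ) (hk : 1 ≤ k) (hn : k ≤ n)
    (x : Fin n → ℝ)
    (hsupp : (Finset.univ.filter fun j => x j ≠ 0).card < n / k)
    (x' : Fin n → ℝ) (hx' : boxA n k x' = boxA n k x) (hne : x' ≠ x) :
    ∑ j, |x j| < ∑ j, |x' j| := by
  have hk0 : 0 < k := hk
  set d : Fin n → ℝ := fun j => x' j - x j with hd
  set D : ℕ → ℝ := fun t => if h : t < n then d ⟨t, h⟩ else 0 with hD
  have hDval : ∀ (j : Fin n), D (j : ℕ) = d j := by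
    intro j; simp [hD, j.isLt]
  -- window sums of d are zero
  have hw : ∀ i : ℕ, i + k ≤ n → ∑ t ∈ Finset.Ico i (i + k), D t = 0 := by
    intro i hik
    have hi : i < n - k + 1 := by omega
    have h1 := congrFun hx' ⟨i, hi⟩
    simp only [boxA] at h1
    have h2 : ∑ j : Fin n, (if i ≤ (j : ℕ) ∧ (j : ℕ) < i + k then d j else 0) = 0 := by
      have heq : ∀ j : Fin n, (if i ≤ (j : ℕ) ∧ (j : ℕ) < i + k then d j else 0)
          = (if i ≤ (j : ℕ) ∧ (j : ℕ) < i + k then x' j else 0)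
            - (if i ≤ (j : ℕ) ∧ (j : ℕ) < i + k then x j else 0) := by
        intro j; split <;> simp [hd]
      rw [Finset.sum_congr rfl (fun j _ => heq j), Finset.sum_sub_distrib, h1, sub_self]
    calc ∑ t ∈ Finset.Ico i (i + k), D t
        = ∑ t ∈ (Finset.range n).filter (fun t => i ≤ t ∧ t < i + k), D t := by
          congr 1; ext t; simp only [Finset.mem_Ico, Finset.mem_filter, Finset.mem_range]; omega
      _ = ∑ t ∈ Finset.range n, (if i ≤ t ∧ t < i + k then D t else 0) :=
          Finset.sum_filter _ _
      _ = ∑ j : Fin n, (if i ≤ (j : ℕ) ∧ (j : ℕ) < i + k then d j else 0) := by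
          rw [← Fin.sum_univ_eq_sum_range (fun t => if i ≤ t ∧ t < i + k then D t else 0) n]
          exact Finset.sum_congr rfl fun j _ => by simp [hDval]
      _ = 0 := h2
  -- recurrence
  have hrec : ∀ j : ℕ, j + k < n → D (j + k) = D j := by
    intro j h
    have h1 := hw j (by omega)
    have h2 := hw (j + 1) (by omega)
    have e1 : ∑ t ∈ Finset.Ico j (j + k), D t = D j + ∑ t ∈ Finset.Ico (j + 1) (j + k), D t :=
      Finset.sum_eq_sum_Ico_succ_bot (by omega) D
    have e2 : ∑ t ∈ Finset.Ico (j + 1) (j + 1 + k), D t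
        = ∑ t ∈ Finset.Ico (j + 1) (j + k), D t + D (j + k) := by
      rw [show j + 1 + k = (j + k) + 1 by ring, Finset.sum_Ico_succ_top (by omega)]
    rw [e1] at h1
    rw [e2] at h2
    linarith
  -- periodicity
  have hper : ∀ j, j < n → D j = D (j % k) := by
    intro j
    induction j using Nat.strong_induction_on with
    | _ j ih =>
      intro hj
      by_cases hjk : j < k
      · rw [Nat.mod_eq_of_lt hjk]
      · push_neg at hjk
        have hjj : j - k + k = j := by omega
        have hr := hrec (j - k) (by omega)
        rw [hjj] at hr
        rw [hr, ih (j - k) (by omega) (by omega)]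
        congr 1
        conv_rhs => rw [← hjj]
        rw [Nat.add_mod_right]
  -- base window sum zero
  have hsum0 : ∑ r ∈ Finset.range k, D r = 0 := by
    have h0 := hw 0 (by omega)
    rw [zero_add] at h0
    rwa [Finset.range_eq_Ico]
  -- d nonzero somewhere
  have hdne : ∃ j : Fin n, d j ≠ 0 := by
    by_contra h; push_neg at h
    apply hne; funext j
    have := h j
    simp only [hd, sub_eq_zero] at this
    exact this
  -- max amplitude
  have hkne : (Finset.range k).Nonempty := ⟨0, Finset.mem_range.mpr hk0⟩
  set M : ℝ := (Finset.range k).sup' hkne (fun r => |D r|) with hM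
  have hMle : ∀ r < k, |D r| ≤ M := by
    intro r hr
    rw [hM]
    exact Finset.le_sup' (fun r => |D r|) (Finset.mem_range.mpr hr)
  obtain ⟨r₀, hr₀mem, hr₀⟩ := Finset.exists_mem_eq_sup' hkne (fun r => |D r|)
  have hSigma : 2 * M ≤ ∑ r ∈ Finset.range k, |D r| := by
    have hadd := Finset.add_sum_erase (Finset.range k) D hr₀mem
    have h1 : D r₀ = -∑ r ∈ (Finset.range k).erase r₀, D r := by
      rw [hsum0] at hadd; linarith
    have h2 : |D r₀| ≤ ∑ r ∈ (Finset.range k).erase r₀, |D r| := by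
      rw [h1, abs_neg]
      exact Finset.abs_sum_le_sum_abs _ _
    have h3 : ∑ r ∈ Finset.range k, |D r|
        = |D r₀| + ∑ r ∈ (Finset.range k).erase r₀, |D r| :=
      (Finset.add_sum_erase _ _ hr₀mem).symm
    rw [hM, hr₀]
    linarith
  have hMpos : 0 < M := by
    obtain ⟨j, hj⟩ := hdne
    have hne0 : D ((j : ℕ) % k) ≠ 0 := by
      rw [← hper j j.isLt, hDval]; exact hj
    calc (0:ℝ) < |D ((j : ℕ) % k)| := abs_pos.mpr hne0
      _ ≤ M := hMle _ (Nat.mod_lt _ hk0)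
  -- counting
  set m := n / k with hm
  have hm1 : 1 ≤ m := (Nat.one_le_div_iff hk0).mpr hn
  set S := Finset.univ.filter (fun j : Fin n => x j ≠ 0) with hS
  have hs : S.card < m := hsupp
  -- total mass of d
  have htot : (m : ℝ) * ∑ r ∈ Finset.range k, |D r| ≤ ∑ j : Fin n, |d j| := by
    have h1 : ∑ j : Fin n, |d j| = ∑ t ∈ Finset.range n, |D t| := by
      rw [← Fin.sum_univ_eq_sum_range (fun t => |D t|) n]
      exact Finset.sum_congr rfl fun j _ => by rw [hDval]
    have hmk : m * k ≤ n := Nat.div_mul_le_self n k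
    have h2 : ∑ t ∈ Finset.range (m * k), |D t| ≤ ∑ t ∈ Finset.range n, |D t| := by
      apply Finset.sum_le_sum_of_subset_of_nonneg (Finset.range_subset_range.mpr hmk)
      intros; positivity
    have h3 : ∑ t ∈ Finset.range (m * k), |D (t % k)|
        = ∑ t ∈ Finset.range (m * k), |D t| := by
      apply Finset.sum_congr rfl
      intro t ht
      rw [← hper t (lt_of_lt_of_le (Finset.mem_range.mp ht) hmk)]
    have h4 := sum_range_mul_mod k (fun r => |D r|) m
    rw [h1]
    calc (m : ℝ) * ∑ r ∈ Finset.range k, |D r|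
        = ∑ t ∈ Finset.range (m * k), |D (t % k)| := h4.symm
      _ = ∑ t ∈ Finset.range (m * k), |D t| := h3
      _ ≤ ∑ t ∈ Finset.range n, |D t| := h2
  -- support mass of d
  have hSsum : ∑ j ∈ S, |d j| ≤ (S.card : ℝ) * M := by
    have hle : ∀ j ∈ S, |d j| ≤ M := by
      intro j _
      rw [← hDval, hper _ j.isLt]
      exact hMle _ (Nat.mod_lt _ hk0)
    calc ∑ j ∈ S, |d j| ≤ ∑ _j ∈ S, M := Finset.sum_le_sum hle
      _ = (S.card : ℝ) * M := by rw [Finset.sum_const, nsmul_eq_mul]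
  -- pointwise inequality
  have hpt : ∀ j : Fin n, |x j| + (if x j = 0 then |d j| else -|d j|) ≤ |x' j| := by
    intro j
    have hx'j : x' j = x j + d j := by simp [hd]
    by_cases h : x j = 0
    · simp [h, hx'j]
    · simp only [if_neg h]
      rw [hx'j]
      have h2 : |x j| - |x j + d j| ≤ |x j - (x j + d j)| := abs_sub_abs_le_abs_sub _ _
      have h3 : x j - (x j + d j) = -(d j) := by ring
      rw [h3, abs_neg] at h2
      linarith
  -- split the correction sum
  have hsplit : ∑ j : Fin n, (if x j = 0 then |d j| else -|d j|)
      = ∑ j : Fin n, |d j| - 2 * ∑ j ∈ S, |d j| := by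
    have hpw : ∀ j : Fin n, (if x j = 0 then |d j| else -|d j|)
        = |d j| - (if x j ≠ 0 then 2 * |d j| else 0) := by
      intro j; by_cases h : x j = 0 <;> simp [h] <;> ring
    rw [Finset.sum_congr rfl fun j _ => hpw j, Finset.sum_sub_distrib]
    congr 1
    rw [hS, ← Finset.sum_filter, Finset.mul_sum]
  -- combine
  have hsum : ∑ j : Fin n, |x j| + ∑ j : Fin n, (if x j = 0 then |d j| else -|d j|)
      ≤ ∑ j : Fin n, |x' j| := by
    rw [← Finset.sum_add_distrib]
    exact Finset.sum_le_sum fun j _ => hpt j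
  have hsm : (S.card : ℝ) + 1 ≤ (m : ℝ) := by exact_mod_cast hs
  have hm1' : (1 : ℝ) ≤ (m : ℝ) := by exact_mod_cast hm1
  have hScard : (0:ℝ) ≤ (S.card : ℝ) := Nat.cast_nonneg _
  have hkey : 2 * M ≤ ∑ j : Fin n, |d j| - 2 * ∑ j ∈ S, |d j| := by
    nlinarith [htot, hSsum, hSigma, hMpos, hsm, hm1', hScard,
      mul_le_mul_of_nonneg_left hSigma (le_trans zero_le_one hm1')]
  rw [hsplit] at hsum
  linarith
end

section
/- Let n ≥ k ≥ 1 and let x ∈ ℝⁿ satisfy |supp(x)| < ⌊n/k⌋. Then x is the unique minimizer of the ℓ1 norm over all solutions of the circular box-deconvolution problem: for every x' ∈ ℝⁿ with Bx' = Bx and x' ≠ x, one has ‖x'‖₁ > ‖x‖₁. -/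
open Finset

section WindowSums

variable {G M : Type*} [AddCommGroup G] [AddCommGroup M] {f : G → M} {g : G} {k : ℕ}

theorem add_nsmul_eq_of_window_sum_eq_zero (hf : ∀ i, ∑ t ∈ range k, f (i + t • g) = 0) (i : G) :
    f (i + k • g) = f i := by
  -- the windows starting at `i` and at `i + g` differ by `f (i + k • g) - f i`
  have hshift := hf (i + g)
  simp only [add_assoc, ← succ_nsmul'] at hshift
  have := sum_range_succ (fun t => f (i + t • g)) k
  rw [sum_range_succ', hf i, zero_add] at this
  simpa [hshift] using this.symm

theorem add_nsmul_nsmul_eq_of_window_sum_eq_zero (hf : ∀ i, ∑ t ∈ range k, f (i + t • g) = 0)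
    (i : G) (m : ℕ) : f (i + m • k • g) = f i := by
  induction m with
  | zero => simp
  | succ m ih => rw [succ_nsmul, ← add_assoc, add_nsmul_eq_of_window_sum_eq_zero hf, ih]

theorem sum_eq_zero_of_window_sum_eq_zero [Fintype G] [IsAddTorsionFree M] (hk : k ≠ 0)
    (hf : ∀ i, ∑ t ∈ range k, f (i + t • g) = 0) : ∑ i, f i = 0 := by
  have htotal : ∑ t ∈ range k, ∑ i, f (i + t • g) = 0 := by
    rw [sum_comm]; exact sum_eq_zero fun i _ => hf i
  have hshift (t : ℕ) : ∑ i, f (i + t • g) = ∑ i, f i := Equiv.sum_comp (Equiv.addRight (t • g)) f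
  rw [sum_congr rfl fun t _ => hshift t, sum_const, card_range] at htotal
  exact (nsmul_eq_zero_iff_right hk).mp htotal

end WindowSums

theorem card_image_add_nsmul_range_addOrderOf {G : Type*} [AddCommGroup G] [DecidableEq G]
    (i d : G) : #((range (addOrderOf d)).image (fun t => i + t • d)) = addOrderOf d := by
  rw [card_image_of_injOn, card_range]
  intro a ha b hb hab
  exact nsmul_injOn_Iio_addOrderOf (by simpa using ha) (by simpa using hb) (add_left_cancel hab)

theorem two_mul_card_mul_abs_le_sum_abs {ι : Type*} [Fintype ι] {f : ι → ℝ} (hf : ∑ j, f j = 0)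
    (s : Finset ι) {c : ℝ} (hc : ∀ j ∈ s, f j = c) : 2 * #s * |c| ≤ ∑ j, |f j| := by
  classical
  have hs : ∑ j ∈ s, f j = #s * c := by rw [sum_congr rfl hc, sum_const, nsmul_eq_mul]
  have hsc : ∑ j ∈ sᶜ, f j = -(#s * c) := by
    rw [← hs]; linarith [sum_add_sum_compl s f]
  calc 2 * #s * |c| = |∑ j ∈ s, f j| + |∑ j ∈ sᶜ, f j| := by
        rw [hsc, hs, abs_neg, abs_mul, Nat.abs_cast]; ring
    _ ≤ ∑ j ∈ s, |f j| + ∑ j ∈ sᶜ, |f j| :=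
        add_le_add (abs_sum_le_sum_abs _ _) (abs_sum_le_sum_abs _ _)
    _ = ∑ j, |f j| := sum_add_sum_compl s _

theorem two_mul_addOrderOf_mul_abs_le_sum_abs {G : Type*} [AddCommGroup G] [Fintype G]
    {f : G → ℝ} (hf : ∑ j, f j = 0) {d : G} (hd : ∀ j (m : ℕ), f (j + m • d) = f j) (i : G) :
    2 * addOrderOf d * |f i| ≤ ∑ j, |f j| := by
  classical
  have := two_mul_card_mul_abs_le_sum_abs hf ((range (addOrderOf d)).image (fun t => i + t • d))
    (c := f i) (by simp [hd])
  rwa [card_image_add_nsmul_range_addOrderOf] at this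

theorem sum_abs_lt_sum_abs_add {ι : Type*} [Fintype ι] {x h : ι → ℝ}
    {s : Finset ι} (hs : ∀ j ∉ s, x j = 0) (hh : 2 * ∑ j ∈ s, |h j| < ∑ j, |h j|) :
    ∑ j, |x j| < ∑ j, |x j + h j| := by
  classical
  have hpt : ∀ j, |x j| + |h j| - (if j ∈ s then 2 * |h j| else 0) ≤ |x j + h j| := by
    intro j
    split_ifs with hj
    · linarith [add_sub_cancel_right (x j) (h j) ▸ abs_sub (x j + h j) (h j)]
    · simp [hs j hj]
  calc ∑ j, |x j| < ∑ j, |x j| + ∑ j, |h j| - 2 * ∑ j ∈ s, |h j| := by linarith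
    _ = ∑ j, (|x j| + |h j| - (if j ∈ s then 2 * |h j| else 0)) := by
        rw [sum_sub_distrib, sum_add_distrib, ← sum_filter, filter_mem_eq_inter, univ_inter,
          mul_sum]
    _ ≤ ∑ j, |x j + h j| := sum_le_sum fun j _ => hpt j

theorem div_le_addOrderOf_nsmul {G : Type*} [AddMonoid G] (x : G) (k : ℕ) :
    addOrderOf x / k ≤ addOrderOf (k • x) := by
  rcases Nat.eq_zero_or_pos k with rfl | hk
  · simp
  rw [addOrderOf_nsmul' x hk.ne']
  exact Nat.div_le_div_left (Nat.gcd_le_right _ hk) (Nat.gcd_pos_of_pos_right _ hk)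

theorem Fin.val_nsmul_one {n : ℕ} [NeZero n] (m : ℕ) : ((m • (1 : Fin n) : Fin n) : ℕ) = m % n := by
  induction m with
  | zero => simp
  | succ m ih => rw [succ_nsmul, Fin.val_add, ih, Fin.val_one', Nat.add_mod_mod, Nat.mod_add_mod]

theorem Fin.addOrderOf_one (n : ℕ) [NeZero n] : addOrderOf (1 : Fin n) = n := by
  refine Nat.dvd_antisymm (addOrderOf_dvd_iff_nsmul_eq_zero.mpr (Fin.ext ?_)) ?_
  · simp [Fin.val_nsmul_one]
  · have h := congrArg Fin.val (addOrderOf_nsmul_eq_zero (1 : Fin n))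
    rw [Fin.val_nsmul_one, Fin.val_zero] at h
    exact Nat.dvd_of_mod_eq_zero h

theorem boxB_apply (n k : ℕ) [NeZero n] (x : Fin n → ℝ) (i : Fin n) :
    boxB n k x i = ∑ t ∈ range k, x (i + t • 1) := by
  rw [boxB, ← Fin.sum_univ_eq_sum_range (fun t => x (i + t • 1))]
  refine sum_congr rfl fun t _ => congrArg x (Fin.ext ?_)
  simp [Fin.val_add, Fin.val_nsmul_one]

theorem boxB_sub (n k : ℕ) (x y : Fin n → ℝ) : boxB n k (x - y) = boxB n k x - boxB n k y := by
  ext i; simp [boxB, sum_sub_distrib]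

/-- If `|supp(x)| < ⌊n/k⌋` then `x` is the unique `ℓ1` minimizer among solutions of
`B x' = B x`: every other solution has strictly larger `ℓ1` norm. -/
theorem boxB_l1_recovery (n k : ℕ) (hk : 1 ≤ k) (hn : k ≤ n)
    (x : Fin n → ℝ)
    (hsupp : (Finset.univ.filter fun j => x j ≠ 0).card < n / k)
    (x' : Fin n → ℝ) (hx' : boxB n k x' = boxB n k x) (hne : x' ≠ x) :
    ∑ j, |x j| < ∑ j, |x' j| := by
  have : NeZero n := ⟨by omega⟩
  set h := x' - x
  have hwin (i : Fin n) : ∑ t ∈ range k, h (i + t • 1) = 0 := by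
    rw [← boxB_apply, boxB_sub, hx', sub_self, Pi.zero_apply]
  obtain ⟨i, -, hi⟩ := exists_max_image univ (fun j => |h j|) univ_nonempty
  have hbound : 2 * addOrderOf (k • (1 : Fin n)) * |h i| ≤ ∑ j, |h j| :=
    two_mul_addOrderOf_mul_abs_le_sum_abs (sum_eq_zero_of_window_sum_eq_zero (by omega) hwin)
      (add_nsmul_nsmul_eq_of_window_sum_eq_zero hwin) i
  have hord : n / k ≤ addOrderOf (k • (1 : Fin n)) := by
    simpa [Fin.addOrderOf_one] using div_le_addOrderOf_nsmul (1 : Fin n) k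
  have hpos : 0 < |h i| := by
    obtain ⟨j, hj⟩ := Function.ne_iff.mp (sub_ne_zero.mpr hne)
    exact (abs_pos.mpr hj).trans_le (hi j (mem_univ j))
  set S := univ.filter fun j => x j ≠ 0
  have hS : ∑ j ∈ S, |h j| ≤ #S * |h i| := by
    simpa using sum_le_card_nsmul S _ _ fun j _ => hi j (mem_univ j)
  have hlt : (#S : ℝ) < addOrderOf (k • (1 : Fin n)) := by exact_mod_cast hsupp.trans_le hord
  have hnull : 2 * ∑ j ∈ S, |h j| < ∑ j, |h j| := calc
    2 * ∑ j ∈ S, |h j| ≤ 2 * #S * |h i| := by linarith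
    _ < 2 * addOrderOf (k • (1 : Fin n)) * |h i| := by gcongr
    _ ≤ ∑ j, |h j| := hbound
  simpa [h] using sum_abs_lt_sum_abs_add (x := x) (s := S) (by simp [S]) hnull
end

section
/- (Tightness of the ℓ1 recovery bound, circular convolution) If k > 1 divides n, then there exist x, x' ∈ ℝⁿ with x ≠ x', |supp(x)| = n/k, Bx' = Bx, and ‖x'‖₁ = ‖x‖₁; in particular, x is not the unique ℓ1-norm minimizer among solutions of Bw = Bx. -/
/-- Exactly one `t ∈ [0,k)` has `(i+t) % k = r`. -/
lemma sum_indicator_mod (k : ℕ) (hk : 0 < k) (r : ℕ) (hr : r < k) (i : ℕ) :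
    ∑ t : Fin k, (if (i + (t : ℕ)) % k = r then (1 : ℝ) else 0) = 1 := by
  have ha : i % k < k := Nat.mod_lt _ hk
  set t0 : Fin k := ⟨(k + r - i % k) % k, Nat.mod_lt _ hk⟩ with ht0
  have key : (i + (t0 : ℕ)) % k = r := by
    have h1 : (i + (t0 : ℕ)) % k = (i % k + (k + r - i % k) % k) % k := by
      conv_lhs => rw [Nat.add_mod i]
      simp [ht0]
    have h2 : (i % k + (k + r - i % k) % k) % k = (i % k + (k + r - i % k)) % k := by
      conv_rhs => rw [Nat.add_mod]
      simp
    have h3 : i % k + (k + r - i % k) = k + r := by omega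
    rw [h1, h2, h3, Nat.add_mod_left, Nat.mod_eq_of_lt hr]
  rw [Finset.sum_eq_single t0]
  · simp [key]
  · intro t _ hne
    rw [if_neg]
    intro h
    apply hne
    have hmod : (i + (t : ℕ)) % k = (i + (t0 : ℕ)) % k := by rw [h, key]
    have h4 : (t : ℕ) ≡ (t0 : ℕ) [MOD k] := Nat.ModEq.add_left_cancel' i hmod
    exact Fin.ext (h4.eq_of_lt_of_lt t.isLt t0.isLt)
  · simp

/-- There are `n/k` indices `j < n` with `j % k = r`. -/
lemma card_mod_filter (n k : ℕ) (hk : 0 < k) (hdvd : k ∣ n) (r : ℕ) (hr : r < k) :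
    (Finset.univ.filter fun j : Fin n => (j : ℕ) % k = r).card = n / k := by
  rw [← Fintype.card_fin (n / k), ← Finset.card_univ]
  refine Finset.card_bij'
    (fun (j : Fin n) _ => (⟨(j : ℕ) / k, Nat.div_lt_div_of_lt_of_dvd hdvd j.isLt⟩ : Fin (n / k)))
    (fun (q : Fin (n / k)) _ => (⟨(q : ℕ) * k + r, by
      have h : ((q : ℕ) + 1) * k ≤ (n / k) * k := Nat.mul_le_mul_right k q.isLt
      rw [Nat.div_mul_cancel hdvd] at h
      have h2 : ((q : ℕ) + 1) * k = (q : ℕ) * k + k := by ring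
      omega⟩ : Fin n)) ?_ ?_ ?_ ?_
  · intro a ha; exact Finset.mem_univ _
  · intro q hq
    refine Finset.mem_filter.2 ⟨Finset.mem_univ _, ?_⟩
    show ((q : ℕ) * k + r) % k = r
    have h : (q : ℕ) * k + r = k * (q : ℕ) + r := by ring
    rw [h, Nat.mul_add_mod, Nat.mod_eq_of_lt hr]
  · intro a ha
    simp only [Finset.mem_filter, Finset.mem_univ, true_and] at ha
    apply Fin.ext
    show (a : ℕ) / k * k + r = a
    have h1 := Nat.div_add_mod (a : ℕ) k
    have h2 : (a : ℕ) / k * k = k * ((a : ℕ) / k) := by ring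
    omega
  · intro q hq
    apply Fin.ext
    show ((q : ℕ) * k + r) / k = q
    have h : (q : ℕ) * k + r = r + k * (q : ℕ) := by ring
    rw [h, Nat.add_mul_div_left _ _ hk, Nat.div_eq_of_lt hr, Nat.zero_add]

/-- Tightness of the `ℓ1` recovery bound for the circular convolution: if `k > 1` divides `n`,
there are distinct `x, x'` with `|supp(x)| = n/k`, `B x' = B x` and `‖x'‖₁ = ‖x‖₁`. -/
theorem boxB_l1_bound_tight (n k : ℕ) (hk : 1 < k) (hn : k ≤ n) (hdvd : k ∣ n) :
    ∃ x x' : Fin n → ℝ, x ≠ x' ∧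
      (Finset.univ.filter fun j => x j ≠ 0).card = n / k ∧
      boxB n k x' = boxB n k x ∧
      ∑ j, |x' j| = ∑ j, |x j| := by
  have hk0 : 0 < k := by omega
  have hn0 : 0 < n := lt_of_lt_of_le hk0 hn
  set x : Fin n → ℝ := fun j => if (j : ℕ) % k = 0 then 1 else 0 with hx
  set x' : Fin n → ℝ := fun j => if (j : ℕ) % k = 1 then 1 else 0 with hx'
  have hB : ∀ (r : ℕ), r < k → ∀ i : Fin n,
      boxB n k (fun j => if (j : ℕ) % k = r then (1 : ℝ) else 0) i = 1 := by
    intro r hr i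
    unfold boxB
    have : ∀ t : Fin k,
        (if (((i : ℕ) + (t : ℕ)) % n) % k = r then (1 : ℝ) else 0)
        = (if ((i : ℕ) + (t : ℕ)) % k = r then (1 : ℝ) else 0) := by
      intro t
      rw [Nat.mod_mod_of_dvd _ hdvd]
    simp only [this]
    exact sum_indicator_mod k hk0 r hr i
  refine ⟨x, x', ?_, ?_, ?_, ?_⟩
  · intro h
    have h0 := congrFun h ⟨0, hn0⟩
    simp [hx, hx', Nat.mod_eq_of_lt hk] at h0
  · have : (Finset.univ.filter fun j : Fin n => x j ≠ 0)
        = Finset.univ.filter fun j : Fin n => (j : ℕ) % k = 0 := by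
      apply Finset.filter_congr
      intro j _
      simp [hx]
    rw [this]
    exact card_mod_filter n k hk0 hdvd 0 hk0
  · funext i
    rw [hx, hx', hB 1 hk i, hB 0 hk0 i]
  · have habs : ∀ (r : ℕ) (j : Fin n),
        |(if (j : ℕ) % k = r then (1 : ℝ) else 0)| = if (j : ℕ) % k = r then (1 : ℝ) else 0 := by
      intro r j
      split <;> simp
    simp only [hx, hx', habs]
    rw [Finset.sum_boole, Finset.sum_boole, card_mod_filter n k hk0 hdvd 0 hk0,
      card_mod_filter n k hk0 hdvd 1 hk]
end

section
/- (Information-theoretic limit, valid convolution) If k > 1 divides n, then there exist x, x' ∈ ℝⁿ with x ≠ x', |supp(x)| = |supp(x')| = n/k, and Ax = Ax'. Hence knowing that a signal has support size exactly n/k together with its valid box convolution is not enough information to recover the signal. -/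
private lemma mulk_add_mod (t k r : ℕ) (hr : r < k) : (t * k + r) % k = r := by
  rw [Nat.add_comm, Nat.add_mul_mod_self_right, Nat.mod_eq_of_lt hr]

private lemma window_eq (k a b i : ℕ) (hk : 0 < k)
    (ha1 : i ≤ a) (ha2 : a < i + k) (hb1 : i ≤ b) (hb2 : b < i + k)
    (h : a % k = b % k) : a = b := by
  have da := Nat.div_add_mod a k
  have db := Nat.div_add_mod b k
  have h1 : a / k = b / k := by
    have l1 : a / k < b / k + 1 := by
      have hlt : (a / k) * k < (b / k + 1) * k := by
        have hab : a < b + k := by omega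
        nlinarith [a.mod_lt hk, b.mod_lt hk, Nat.mul_comm (a / k) k, Nat.mul_comm (b / k) k]
      exact lt_of_mul_lt_mul_right hlt (Nat.zero_le k)
    have l2 : b / k < a / k + 1 := by
      have hlt : (b / k) * k < (a / k + 1) * k := by
        have hba : b < a + k := by omega
        nlinarith [a.mod_lt hk, b.mod_lt hk, Nat.mul_comm (a / k) k, Nat.mul_comm (b / k) k]
      exact lt_of_mul_lt_mul_right hlt (Nat.zero_le k)
    omega
  rw [h1] at da
  omega

private lemma window_exu (k i r : ℕ) (hk : 0 < k) (hr : r < k) :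
    ∃! j : ℕ, (i ≤ j ∧ j < i + k) ∧ j % k = r := by
  have hm : i % k < k := Nat.mod_lt i hk
  have hdm := Nat.div_add_mod i k
  have hcm : i / k * k = k * (i / k) := Nat.mul_comm _ _
  by_cases h : i % k ≤ r
  · refine ⟨i / k * k + r, ⟨⟨by omega, by omega⟩, mulk_add_mod _ _ _ hr⟩, ?_⟩
    rintro j ⟨⟨h1, h2⟩, h3⟩
    exact window_eq k j (i / k * k + r) i hk h1 h2 (by omega) (by omega)
      (by rw [h3, mulk_add_mod _ _ _ hr])
  · have hrw : i / k * k + k + r = (i / k + 1) * k + r := by ring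
    refine ⟨i / k * k + k + r, ⟨⟨by omega, by omega⟩, by rw [hrw]; exact mulk_add_mod _ _ _ hr⟩, ?_⟩
    rintro j ⟨⟨h1, h2⟩, h3⟩
    exact window_eq k j (i / k * k + k + r) i hk h1 h2 (by omega) (by omega)
      (by rw [h3, hrw, mulk_add_mod _ _ _ hr])

private lemma range_filter_card (n k r : ℕ) (hk : 0 < k) (hr : r < k) (hdvd : k ∣ n) :
    ((Finset.range n).filter (fun j => j % k = r)).card = n / k := by
  obtain ⟨c, rfl⟩ := hdvd
  have hkc : k * c / k = c := Nat.mul_div_cancel_left c hk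
  have himg : (Finset.range (k * c)).filter (fun j => j % k = r)
      = (Finset.range c).image (fun t => t * k + r) := by
    ext j
    simp only [Finset.mem_filter, Finset.mem_range, Finset.mem_image]
    constructor
    · rintro ⟨h1, h2⟩
      have hd := Nat.div_add_mod j k
      have hcm : j / k * k = k * (j / k) := Nat.mul_comm _ _
      refine ⟨j / k, ?_, by omega⟩
      by_contra hc
      push_neg at hc
      have hck : c * k = k * c := Nat.mul_comm _ _
      have h3 : c * k ≤ j / k * k := Nat.mul_le_mul_right k hc
      omega
    · rintro ⟨t, ht, rfl⟩
      refine ⟨?_, mulk_add_mod _ _ _ hr⟩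
      calc t * k + r < t * k + k := by omega
        _ = (t + 1) * k := by ring
        _ ≤ c * k := Nat.mul_le_mul_right k ht
        _ = k * c := Nat.mul_comm _ _
  rw [himg, Finset.card_image_of_injective _ (fun a b hab => by
      exact Nat.eq_of_mul_eq_mul_right hk (Nat.add_right_cancel hab)),
    Finset.card_range, hkc]

private lemma fin_filter_card (n k r : ℕ) (hk : 0 < k) (hr : r < k) (hdvd : k ∣ n) :
    (Finset.univ.filter fun j : Fin n => (j : ℕ) % k = r).card = n / k := by
  rw [← range_filter_card n k r hk hr hdvd]
  have himg : (Finset.range n).filter (fun j => j % k = r)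
      = Finset.image Fin.val (Finset.univ.filter fun j : Fin n => (j : ℕ) % k = r) := by
    ext a
    simp only [Finset.mem_filter, Finset.mem_range, Finset.mem_image, Finset.mem_univ, true_and]
    constructor
    · rintro ⟨h1, h2⟩; exact ⟨⟨a, h1⟩, h2, rfl⟩
    · rintro ⟨b, hb, rfl⟩; exact ⟨b.isLt, hb⟩
  rw [himg, Finset.card_image_of_injective _ Fin.val_injective]

private lemma boxA_comb (n k r : ℕ) (hk : 0 < k) (hr : r < k) (hn : k ≤ n)
    (i : Fin (n - k + 1)) :
    boxA n k (fun j => if (j : ℕ) % k = r then 1 else 0) i = 1 := by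
  obtain ⟨j₀, ⟨⟨hj1, hj2⟩, hj3⟩, huniq⟩ := window_exu k (i : ℕ) r hk hr
  have hin : (i : ℕ) ≤ n - k := by omega
  have hj₀n : j₀ < n := by omega
  set J : Fin n := ⟨j₀, hj₀n⟩ with hJ
  have hcongr : (∑ j : Fin n, if (i : ℕ) ≤ (j : ℕ) ∧ (j : ℕ) < (i : ℕ) + k then
      (if (j : ℕ) % k = r then (1 : ℝ) else 0) else 0)
      = ∑ j : Fin n, if j = J then (1 : ℝ) else 0 := by
    refine Finset.sum_congr rfl fun j _ => ?_
    by_cases hc : (i : ℕ) ≤ (j : ℕ) ∧ (j : ℕ) < (i : ℕ) + k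
    · rw [if_pos hc]
      by_cases hm : (j : ℕ) % k = r
      · have hjJ : (j : ℕ) = j₀ := huniq j ⟨hc, hm⟩
        rw [if_pos hm, if_pos (Fin.ext hjJ)]
      · rw [if_neg hm, if_neg (fun h => hm (by rw [h]; exact hj3))]
    · rw [if_neg hc, if_neg (fun h => hc (by rw [h]; exact ⟨hj1, hj2⟩))]
  rw [boxA, hcongr]
  simp

/-- Information-theoretic limit for the valid convolution: if `k > 1` divides `n`, there are
distinct signals with support size exactly `n/k` and the same valid box convolution. -/
theorem boxA_information_limit (n k : ℕ) (hk : 1 < k) (hn : k ≤ n) (hdvd : k ∣ n) :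
    ∃ x x' : Fin n → ℝ, x ≠ x' ∧
      (Finset.univ.filter fun j => x j ≠ 0).card = n / k ∧
      (Finset.univ.filter fun j => x' j ≠ 0).card = n / k ∧
      boxA n k x = boxA n k x' := by
  have hk0 : 0 < k := by omega
  refine ⟨(fun j => if (j : ℕ) % k = 0 then 1 else 0),
    (fun j => if (j : ℕ) % k = 1 then 1 else 0), ?_, ?_, ?_, ?_⟩
  · intro h
    have h0 : (0 : ℕ) < n := by omega
    have h1 := congrFun h ⟨0, h0⟩
    simp [Nat.zero_mod] at h1
  · rw [← fin_filter_card n k 0 hk0 hk0 hdvd]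
    congr 1; ext j
    simp only [ne_eq, ite_eq_right_iff, one_ne_zero, imp_false, not_not]
  · rw [← fin_filter_card n k 1 hk0 hk hdvd]
    congr 1; ext j
    simp only [ne_eq, ite_eq_right_iff, one_ne_zero, imp_false, not_not]
  · funext i
    rw [boxA_comb n k 0 hk0 hk0 hn i, boxA_comb n k 1 hk0 hk hn i]
end

section
/- (Information-theoretic limit, circular convolution) If k > 1 divides n, then there exist x, x' ∈ ℝⁿ with x ≠ x', |supp(x)| = |supp(x')| = n/k, and Bx = Bx'. Hence knowing that a signal has support size exactly n/k together with its circular box convolution is not enough information to recover the signal. -/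
lemma card_residue (n k r : ℕ) (hk : 0 < k) (hr : r < k) (hdvd : k ∣ n) :
    (Finset.univ.filter fun j : Fin n => j.val % k = r).card = n / k := by
  apply Finset.card_eq_of_bijective (fun m hm => ⟨m * k + r, by
    have h1 : (m + 1) * k ≤ (n / k) * k := Nat.mul_le_mul_right k hm
    rw [Nat.div_mul_cancel hdvd] at h1
    nlinarith⟩)
  · intro a ha
    simp only [Finset.mem_filter, Finset.mem_univ, true_and] at ha
    refine ⟨a.val / k, Nat.div_lt_div_of_lt_of_dvd hdvd a.isLt, ?_⟩
    apply Fin.ext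
    show a.val / k * k + r = a.val
    rw [← ha]
    exact Nat.div_add_mod' _ _
  · intro m hm
    simp only [Finset.mem_filter, Finset.mem_univ, true_and]
    rw [Nat.mul_comm, Nat.mul_add_mod, Nat.mod_eq_of_lt hr]
  · intro i j hi hj hij
    have : i * k + r = j * k + r := congrArg Fin.val hij
    have : i * k = j * k := by omega
    exact Nat.eq_of_mul_eq_mul_right hk this

lemma sum_indicator (k a r : ℕ) (hk : 0 < k) (hr : r < k) :
    ∑ t : Fin k, (if (a + t.val) % k = r then (1 : ℝ) else 0) = 1 := by
  haveI : NeZero k := ⟨hk.ne'⟩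
  have key : ∑ t : Fin k, (if (a + t.val) % k = r then (1 : ℝ) else 0)
      = ∑ t : Fin k, (if t.val = r then (1 : ℝ) else 0) := by
    refine Fintype.sum_equiv (Equiv.addLeft (⟨a % k, Nat.mod_lt _ hk⟩ : Fin k)) _ _ ?_
    intro t
    have : ((⟨a % k, Nat.mod_lt _ hk⟩ : Fin k) + t).val = (a + t.val) % k := by
      rw [Fin.val_add]
      simp [Nat.mod_add_mod]
    simp [Equiv.addLeft, this]
  rw [key]
  have : ∀ t : Fin k, (t.val = r) ↔ (t = ⟨r, hr⟩) := by
    intro t; constructor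
    · intro h; exact Fin.ext h
    · intro h; rw [h]
  simp_rw [this]
  simp [Finset.sum_ite_eq']

lemma boxB_const (n k r : ℕ) (hk : 0 < k) (hr : r < k) (hdvd : k ∣ n) :
    boxB n k (fun j => if j.val % k = r then (1 : ℝ) else 0) = fun _ => 1 := by
  funext i
  unfold boxB
  have : ∀ t : Fin k, (((i : ℕ) + (t : ℕ)) % n) % k = ((i : ℕ) + (t : ℕ)) % k := by
    intro t; exact Nat.mod_mod_of_dvd _ hdvd
  simp only [this]
  exact sum_indicator k i.val r hk hr

/-- Information-theoretic limit for the circular convolution: if `k > 1` divides `n`, there are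
distinct signals with support size exactly `n/k` and the same circular box convolution. -/
theorem boxB_information_limit (n k : ℕ) (hk : 1 < k) (hn : k ≤ n) (hdvd : k ∣ n) :
    ∃ x x' : Fin n → ℝ, x ≠ x' ∧
      (Finset.univ.filter fun j => x j ≠ 0).card = n / k ∧
      (Finset.univ.filter fun j => x' j ≠ 0).card = n / k ∧
      boxB n k x = boxB n k x' := by
  have hk0 : 0 < k := by omega
  have hn0 : 0 < n := lt_of_lt_of_le hk0 hn
  refine ⟨fun j => if j.val % k = 0 then (1 : ℝ) else 0,
          fun j => if j.val % k = 1 then (1 : ℝ) else 0, ?_, ?_, ?_, ?_⟩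
  · intro h
    have := congrFun h ⟨0, hn0⟩
    norm_num at this
  · have : (Finset.univ.filter fun j : Fin n => (if j.val % k = 0 then (1 : ℝ) else 0) ≠ 0)
        = Finset.univ.filter fun j : Fin n => j.val % k = 0 :=
      Finset.filter_congr (fun j _ => by by_cases h : j.val % k = 0 <;> simp [h])
    rw [this]
    exact card_residue n k 0 hk0 hk0 hdvd
  · have : (Finset.univ.filter fun j : Fin n => (if j.val % k = 1 then (1 : ℝ) else 0) ≠ 0)
        = Finset.univ.filter fun j : Fin n => j.val % k = 1 :=
      Finset.filter_congr (fun j _ => by by_cases h : j.val % k = 1 <;> simp [h])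
    rw [this]
    exact card_residue n k 1 hk0 hk hdvd
  · rw [boxB_const n k 0 hk0 hk0 hdvd, boxB_const n k 1 hk0 hk hdvd]
end

section
/- (Nullspace property for the circular box kernel) Let n ≥ k ≥ 1 and let z ∈ ℝⁿ be a nonzero vector in the kernel of B. Then for every subset S ⊆ {0,…,n−1} with |S| < ⌊n/k⌋, one has ‖z_{S̄}‖₁ > ‖z_S‖₁, i.e., ∑_{j ∉ S} |z_j| > ∑_{j ∈ S} |z_j|. -/
/-- Nullspace property: a nonzero `z ∈ ker(B)` satisfies `‖z_{S̄}‖₁ > ‖z_S‖₁` whenever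
`|S| < ⌊n/k⌋`. -/
theorem boxB_nullspace_property (n k : ℕ) (hk : 1 ≤ k) (hn : k ≤ n)
    (z : Fin n → ℝ) (hz : boxB n k z = 0) (hz0 : z ≠ 0)
    (S : Finset (Fin n)) (hS : S.card < n / k) :
    ∑ j ∈ S, |z j| < ∑ j ∈ Sᶜ, |z j| := by
  have hn0 : 0 < n := lt_of_lt_of_le hk hn
  set w : ℕ → ℝ := fun i => z ⟨i % n, Nat.mod_lt _ hn0⟩ with hw
  -- window sums vanish
  have hA : ∀ i : ℕ, ∑ t ∈ Finset.range k, w (i + t) = 0 := by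
    intro i
    have h0 := congrFun hz ⟨i % n, Nat.mod_lt _ hn0⟩
    rw [boxB] at h0
    simp only [Pi.zero_apply] at h0
    rw [← Fin.sum_univ_eq_sum_range (fun t => w (i + t)) k]
    rw [← h0]
    apply Finset.sum_congr rfl
    intro t _
    simp only [hw]
    congr 1
    exact Fin.ext (by simp [Nat.mod_add_mod, Nat.add_mod_right])
  -- period k
  have hB : ∀ i : ℕ, w (i + k) = w i := by
    intro i
    have h1 := hA i
    have h2 := hA (i + 1)
    have e1 : ∑ t ∈ Finset.range (k + 1), w (i + t)
        = (∑ t ∈ Finset.range k, w (i + t)) + w (i + k) := Finset.sum_range_succ _ _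
    have e2 : ∑ t ∈ Finset.range (k + 1), w (i + t)
        = (∑ t ∈ Finset.range k, w (i + (t + 1))) + w (i + 0) := Finset.sum_range_succ' _ _
    have e3 : ∑ t ∈ Finset.range k, w (i + (t + 1)) = ∑ t ∈ Finset.range k, w ((i + 1) + t) := by
      apply Finset.sum_congr rfl; intro t _; ring_nf
    rw [e3, h2] at e2
    rw [h1] at e1
    rw [e1] at e2
    simpa using e2
  have hBs : ∀ (s i : ℕ), w (i + s * k) = w i := by
    intro s
    induction s with
    | zero => simp
    | succ m ih =>
      intro i
      have : i + (m + 1) * k = (i + k) + m * k := by ring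
      rw [this, ih, hB]
  -- window lower bound
  have hW : ∀ j : ℕ, 2 * |w j| ≤ ∑ t ∈ Finset.range k, |w (j + t)| := by
    intro j
    obtain ⟨k', rfl⟩ : ∃ k', k = k' + 1 := ⟨k - 1, (Nat.succ_pred_eq_of_pos hk).symm⟩
    have h1 := hA j
    rw [Finset.sum_range_succ'] at h1
    have habs : |w j| ≤ ∑ t ∈ Finset.range k', |w (j + (t + 1))| := by
      have : w j = -(∑ t ∈ Finset.range k', w (j + (t + 1))) := by
        simp only [Nat.add_zero] at h1; linarith
      calc |w j| = |∑ t ∈ Finset.range k', w (j + (t + 1))| := by rw [this, abs_neg]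
        _ ≤ ∑ t ∈ Finset.range k', |w (j + (t + 1))| := Finset.abs_sum_le_sum_abs _ _
    have h2 : ∑ t ∈ Finset.range (k' + 1), |w (j + t)|
        = (∑ t ∈ Finset.range k', |w (j + (t + 1))|) + |w (j + 0)| := Finset.sum_range_succ' _ _
    rw [h2]
    simp only [Nat.add_zero]
    linarith
  -- pick max index
  have hne : Nonempty (Fin n) := ⟨⟨0, hn0⟩⟩
  obtain ⟨j0, hj0⟩ := Finite.exists_max (fun j : Fin n => |z j|)
  set M : ℝ := |z j0| with hM
  have hwj0 : ∀ s : ℕ, w ((j0 : ℕ) + s * k) = z j0 := by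
    intro s
    rw [hBs]
    simp only [hw]
    congr 1
    exact Fin.ext (by simp [Nat.mod_eq_of_lt j0.isLt])
  have hMpos : 0 < M := by
    obtain ⟨j, hj⟩ := Function.ne_iff.mp hz0
    have : (0 : ℝ) < |z j| := abs_pos.mpr hj
    exact lt_of_lt_of_le this (hj0 j)
  set q : ℕ := n / k with hq
  -- blocks
  have hblocks : ∀ m : ℕ, 2 * m * M ≤ ∑ t ∈ Finset.range (m * k), |w ((j0 : ℕ) + t)| := by
    intro m
    induction m with
    | zero => simp
    | succ p ih =>
      have hsplit : ∑ t ∈ Finset.range (p * k + k), |w ((j0 : ℕ) + t)|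
          = (∑ t ∈ Finset.range (p * k), |w ((j0 : ℕ) + t)|)
            + ∑ t ∈ Finset.range k, |w ((j0 : ℕ) + (p * k + t))| := Finset.sum_range_add _ _ _
      have hwin : 2 * M ≤ ∑ t ∈ Finset.range k, |w ((j0 : ℕ) + (p * k + t))| := by
        have := hW ((j0 : ℕ) + p * k)
        have e : ∀ t, ((j0 : ℕ) + p * k) + t = (j0 : ℕ) + (p * k + t) := fun t => by ring
        have hMv : |w ((j0 : ℕ) + p * k)| = M := by rw [hwj0 p]
        rw [hMv] at this
        calc 2 * M ≤ ∑ t ∈ Finset.range k, |w (((j0 : ℕ) + p * k) + t)| := this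
          _ = ∑ t ∈ Finset.range k, |w ((j0 : ℕ) + (p * k + t))| := by
              apply Finset.sum_congr rfl; intro t _; rw [e t]
      have hm : (p + 1) * k = p * k + k := by ring
      rw [hm, hsplit]
      push_cast
      linarith
  -- injectivity: total l1 bound
  have hqk : q * k ≤ n := Nat.div_mul_le_self n k
  have hInj : ∑ t ∈ Finset.range (q * k), |w ((j0 : ℕ) + t)| ≤ ∑ j : Fin n, |z j| := by
    set f : ℕ → Fin n := fun t => ⟨((j0 : ℕ) + t) % n, Nat.mod_lt _ hn0⟩ with hf
    have hinj : Set.InjOn f (Finset.range (q * k)) := by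
      intro t1 h1 t2 h2 heq
      simp only [Finset.coe_range, Set.mem_Iio] at h1 h2
      have h1' : t1 < n := lt_of_lt_of_le h1 hqk
      have h2' : t2 < n := lt_of_lt_of_le h2 hqk
      have : ((j0 : ℕ) + t1) % n = ((j0 : ℕ) + t2) % n := congrArg Fin.val heq
      have hmod : t1 % n = t2 % n := Nat.ModEq.add_left_cancel' (j0 : ℕ) this
      rwa [Nat.mod_eq_of_lt h1', Nat.mod_eq_of_lt h2'] at hmod
    have heq : ∑ t ∈ Finset.range (q * k), |w ((j0 : ℕ) + t)|
        = ∑ j ∈ (Finset.range (q * k)).image f, |z j| := by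
      rw [Finset.sum_image (fun a ha b hb => hinj ha hb)]
    rw [heq]
    apply Finset.sum_le_sum_of_subset_of_nonneg (Finset.subset_univ _)
    intro j _ _
    exact abs_nonneg _
  -- final arithmetic
  have hT : (∑ j ∈ S, |z j|) + (∑ j ∈ Sᶜ, |z j|) = ∑ j : Fin n, |z j| :=
    Finset.sum_add_sum_compl S _
  have hSle : ∑ j ∈ S, |z j| ≤ (S.card : ℝ) * M := by
    calc ∑ j ∈ S, |z j| ≤ ∑ _j ∈ S, M := Finset.sum_le_sum (fun j _ => hj0 j)
      _ = (S.card : ℝ) * M := by rw [Finset.sum_const, nsmul_eq_mul]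
  have hcard : (S.card : ℝ) + 1 ≤ (q : ℝ) := by exact_mod_cast hS
  have htotal : 2 * (q : ℝ) * M ≤ ∑ j : Fin n, |z j| := le_trans (hblocks q) hInj
  nlinarith [hSle, hcard, htotal, hT, hMpos]
end
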